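/- arXiv:cs/0609009 — 4 statements merged into one kernel-verified Lean document; each statement's English description precedes it below -/
import Mathlib

section
/- Let G be a graph with real vertex weights, and for each pair (U, U') of vertex subsets inducing cliques, define the maximum witness as the maximum-weight b-subset U'' such that U ∪ U'' and U'' ∪ U' each induce cliques. If U ∪ U' induces a clique of size a + c and U'' is a maximum-weight b-subset with U ∪ U'', U'' ∪ U' inducing cliques of sizes a+b and b+c respectively, and moreover U ∪ U' ∪ U'' induces a clique on a+b+c vertices, then the weight of U ∪ U' ∪ U'' is the maximum weight over all (a+b+c)-cliques of G containing U ∪ U'. -/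
/-! Every `(a+b+c)`-clique `S ⊇ U ∪ U'` is `U ∪ U'` together with the `b`-set `S \ (U ∪ U')`,
which is itself a witness for `(U, U')`; so its weight is at most that of `U''`. -/

open Finset

theorem SimpleGraph.IsClique.isNClique_union {V : Type*} [DecidableEq V] {G : SimpleGraph V}
    {S A B : Finset V} (hS : G.IsClique (S : Set V)) (hA : A ⊆ S) (hB : B ⊆ S)
    (hAB : Disjoint A B) : G.IsNClique (#A + #B) (A ∪ B) :=
  ⟨hS.subset (mod_cast union_subset hA hB), card_union_of_disjoint hAB⟩

theorem maxWitness_heaviest_clique_general {V : Type*} [DecidableEq V]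
    (G : SimpleGraph V) (w : V → ℝ) (a b c : ℕ)
    (U U' U'' : Finset V) (hU : U.card = a) (hU' : U'.card = c) (hU'' : U''.card = b)
    (hUU' : G.IsNClique (a + c) (U ∪ U'))
    (hmax : ∀ W : Finset V, W.card = b → G.IsNClique (a + b) (U ∪ W) →
      G.IsNClique (b + c) (W ∪ U') → ∑ v ∈ W, w v ≤ ∑ v ∈ U'', w v)
    (hall : G.IsNClique (a + b + c) (U ∪ U' ∪ U'')) :
    IsGreatest {x : ℝ | ∃ S : Finset V, G.IsNClique (a + b + c) S ∧ U ∪ U' ⊆ S ∧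
        x = ∑ v ∈ S, w v}
      (∑ v ∈ U ∪ U' ∪ U'', w v) := by
  refine ⟨⟨_, hall, subset_union_left, rfl⟩, ?_⟩
  rintro _ ⟨S, hS, hsub, rfl⟩
  set W := S \ (U ∪ U')
  have hW : #W = b := by
    rw [card_sdiff_of_subset hsub, hS.card_eq, hUU'.card_eq]; omega
  have hUW : G.IsNClique (a + b) (U ∪ W) := hU ▸ hW ▸
    hS.isClique.isNClique_union (subset_union_left.trans hsub) sdiff_subset
      (disjoint_sdiff.mono_left subset_union_left)
  have hWU' : G.IsNClique (b + c) (W ∪ U') := hU' ▸ hW ▸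
    hS.isClique.isNClique_union sdiff_subset (subset_union_right.trans hsub)
      (disjoint_sdiff.mono_left subset_union_right).symm
  -- the cardinalities in `hall` leave no room for `U''` to meet `U ∪ U'`
  have hdisj : Disjoint (U ∪ U') U'' := by
    rw [← card_union_eq_card_add_card, hall.card_eq, hUU'.card_eq, hU'']; omega
  calc ∑ v ∈ S, w v = ∑ v ∈ W, w v + ∑ v ∈ U ∪ U', w v := (sum_sdiff hsub).symm
    _ ≤ ∑ v ∈ U'', w v + ∑ v ∈ U ∪ U', w v := add_le_add_left (hmax W hW hUW hWU') _
    _ = ∑ v ∈ U ∪ U' ∪ U'', w v := by rw [sum_union hdisj, add_comm]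

/-- If `U ∪ U'` induces an `(a+c)`-clique, `U''` is a maximum-weight `b`-set such that
`U ∪ U''` and `U'' ∪ U'` induce cliques of sizes `a+b` and `b+c`, and `U ∪ U' ∪ U''`
induces an `(a+b+c)`-clique, then the weight of `U ∪ U' ∪ U''` is the maximum weight over
all `(a+b+c)`-cliques of `G` containing `U ∪ U'`. -/
theorem maxWitness_heaviest_clique {V : Type*} [Fintype V] [DecidableEq V]
    (G : SimpleGraph V) (w : V → ℝ) (a b c : ℕ) (ha : 0 < a) (hb : 0 < b) (hc : 0 < c)
    (U U' U'' : Finset V) (hU : U.card = a) (hU' : U'.card = c) (hU'' : U''.card = b)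
    (hUU' : G.IsNClique (a + c) (U ∪ U'))
    (hUU'' : G.IsNClique (a + b) (U ∪ U''))
    (hU''U' : G.IsNClique (b + c) (U'' ∪ U'))
    (hmax : ∀ W : Finset V, W.card = b → G.IsNClique (a + b) (U ∪ W) →
      G.IsNClique (b + c) (W ∪ U') → ∑ v ∈ W, w v ≤ ∑ v ∈ U'', w v)
    (hall : G.IsNClique (a + b + c) (U ∪ U' ∪ U'')) :
    IsGreatest {x : ℝ | ∃ S : Finset V, G.IsNClique (a + b + c) S ∧ U ∪ U' ⊆ S ∧
        x = ∑ v ∈ S, w v}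
      (∑ v ∈ U ∪ U' ∪ U'', w v) :=
  maxWitness_heaviest_clique_general G w a b c U U' U'' hU hU' hU'' hUU' hmax hall
end

section
/- Let ω be a real number with 2 ≤ ω < 3 and define t(ω,h) via the optimization program with s₁ and s₂ as in the paper. Then t(ω,h)/h → 3/(6-ω) as h → ∞; in particular, since ω < 2.376, t(ω,h) < 0.828·h for all sufficiently large h. -/
/-- `b₁` is the largest natural number `b` with `b/(4-ω) ≤ ⌊(h-b)/2⌋`. -/
noncomputable def b1 (ω : ℝ) (h : ℕ) : ℕ :=
  sSup {b : ℕ | (b : ℝ) / (4 - ω) ≤ (((h - b) / 2 : ℕ) : ℝ)}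

/-- `s₁ = h - b₁ + b₁/(4-ω)`. -/
noncomputable def s1 (ω : ℝ) (h : ℕ) : ℝ :=
  (h : ℝ) - (b1 ω h : ℝ) + (b1 ω h : ℝ) / (4 - ω)

/-- `s₂ = min over integers b with ⌊(h-b)/2⌋ ≤ b ≤ h-2 of
`max{h - b + ⌊(h-b)/2⌋, h - (3-ω)⌊(h-b)/2⌋}`. -/
noncomputable def s2 (ω : ℝ) (h : ℕ) : ℝ :=
  sInf {x : ℝ | ∃ b : ℕ, (h - b) / 2 ≤ b ∧ b ≤ h - 2 ∧
    x = max ((h : ℝ) - (b : ℝ) + (((h - b) / 2 : ℕ) : ℝ))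
            ((h : ℝ) - (3 - ω) * (((h - b) / 2 : ℕ) : ℝ))}

/-- `t(ω,h) = min{s₁, s₂}`. -/
noncomputable def tExp (ω : ℝ) (h : ℕ) : ℝ := min (s1 ω h) (s2 ω h)

/-!
Both programs trade a quantity `m` (the value `b₁/(4-ω)` in `s₁`, the number `⌊(h-b)/2⌋` in `s₂`)
between the two costs `3m` and `h - (3-ω)m`. Since `(6-ω)·max(3m, h-(3-ω)m)` dominates the
combination `(3-ω)·3m + 3·(h-(3-ω)m) = 3h`, every admissible choice costs at least `3h/(6-ω)`,
and `m = ⌈h/(6-ω)⌉` is admissible in `s₂` and costs at most `3h/(6-ω) + 3`.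
-/

open Filter Topology

theorem three_mul_div_le_max {ω : ℝ} (hω : ω ≤ 3) (H m : ℝ) :
    3 * H / (6 - ω) ≤ max (3 * m) (H - (3 - ω) * m) := by
  rw [div_le_iff₀ (by linarith)]
  nlinarith [mul_le_mul_of_nonneg_left (le_max_left (3 * m) (H - (3 - ω) * m))
      (sub_nonneg.mpr hω), le_max_right (3 * m) (H - (3 - ω) * m)]

theorem tendsto_div_natCast_of_le_of_le_add {f : ℕ → ℝ} {c d : ℝ}
    (hlo : ∀ᶠ n in atTop, c * n ≤ f n) (hhi : ∀ᶠ n in atTop, f n ≤ c * n + d) :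
    Tendsto (fun n => f n / n) atTop (𝓝 c) := by
  have hd : Tendsto (fun n : ℕ => c + d / n) atTop (𝓝 c) := by
    simpa using tendsto_const_nhds.add (tendsto_const_div_atTop_nhds_zero_nat d)
  refine tendsto_of_tendsto_of_tendsto_of_le_of_le' tendsto_const_nhds hd ?_ ?_
  · filter_upwards [hlo, eventually_gt_atTop 0] with n hn hpos
    rwa [le_div_iff₀ (by exact_mod_cast hpos)]
  · filter_upwards [hhi, eventually_gt_atTop 0] with n hn hpos
    have hpos : (0 : ℝ) < n := by exact_mod_cast hpos
    rw [div_le_iff₀ hpos, add_mul, div_mul_cancel₀ d hpos.ne']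
    exact hn

section b1

variable {ω : ℝ} {h : ℕ}

theorem le_of_mem_b1_set (hω : ω < 4) {b : ℕ}
    (hb : (b : ℝ) / (4 - ω) ≤ (((h - b) / 2 : ℕ) : ℝ)) : b ≤ h := by
  by_contra! hbh
  rw [Nat.sub_eq_zero_of_le hbh.le, Nat.zero_div, Nat.cast_zero,
    div_le_iff₀ (by linarith), zero_mul] at hb
  have : b = 0 := by exact_mod_cast hb.antisymm b.cast_nonneg
  omega

theorem b1_spec (hω : ω < 4) :
    (b1 ω h : ℝ) / (4 - ω) ≤ (((h - b1 ω h) / 2 : ℕ) : ℝ) := by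
  have hbdd : BddAbove {b : ℕ | (b : ℝ) / (4 - ω) ≤ (((h - b) / 2 : ℕ) : ℝ)} :=
    ⟨h, fun _ hb => le_of_mem_b1_set hω hb⟩
  exact Nat.sSup_mem ⟨0, by simp⟩ hbdd

theorem b1_le (hω : ω < 4) : b1 ω h ≤ h :=
  le_of_mem_b1_set hω (b1_spec hω)

end b1

theorem three_mul_div_le_s1 {ω : ℝ} (hω : ω ≤ 3) (h : ℕ) :
    3 * h / (6 - ω) ≤ s1 ω h := by
  have h4 : (4 - ω) ≠ 0 := by linarith
  set C := (b1 ω h : ℝ) / (4 - ω)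
  have hB : (b1 ω h : ℝ) = (4 - ω) * C := (mul_div_cancel₀ _ h4).symm
  have hC : 2 * C ≤ h - b1 ω h := by
    have := (b1_spec (ω := ω) (h := h) (by linarith)).trans Nat.cast_div_le
    rw [Nat.cast_sub (b1_le (by linarith)), Nat.cast_ofNat] at this
    linarith
  calc 3 * h / (6 - ω) ≤ max (3 * C) (h - (3 - ω) * C) := three_mul_div_le_max hω _ _
    _ ≤ s1 ω h := max_le (by unfold s1; linarith) (by unfold s1; linarith)

theorem three_mul_div_le_s2 {ω : ℝ} (hω : ω ≤ 3) {h : ℕ} (hh : 3 ≤ h) :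
    3 * h / (6 - ω) ≤ s2 ω h := by
  refine le_csInf ⟨_, h - 2, by omega, le_rfl, rfl⟩ ?_
  rintro x ⟨b, -, hbh, rfl⟩
  set m := (((h - b) / 2 : ℕ) : ℝ)
  have hm : 2 * m ≤ h - b := by
    have := (Nat.cast_div_le (m := h - b) (n := 2) (α := ℝ))
    rw [Nat.cast_sub (by omega : b ≤ h), Nat.cast_ofNat] at this
    linarith
  calc 3 * h / (6 - ω) ≤ max (3 * m) (h - (3 - ω) * m) := three_mul_div_le_max hω _ _
    _ ≤ _ := max_le_max (by linarith) le_rfl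

theorem s2_le_max {ω : ℝ} {h m : ℕ} (hm : 1 ≤ m) (hmh : 3 * m ≤ h) :
    s2 ω h ≤ max (3 * (m : ℝ)) (h - (3 - ω) * m) := by
  have hsub : h - (h - 2 * m) = 2 * m := by omega
  have hbound : BddBelow {x : ℝ | ∃ b : ℕ, (h - b) / 2 ≤ b ∧ b ≤ h - 2 ∧
      x = max ((h : ℝ) - (b : ℝ) + (((h - b) / 2 : ℕ) : ℝ))
              ((h : ℝ) - (3 - ω) * (((h - b) / 2 : ℕ) : ℝ))} := by
    refine ⟨0, ?_⟩
    rintro x ⟨b, -, hbh, rfl⟩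
    have : (b : ℝ) ≤ h := by exact_mod_cast (by omega : b ≤ h)
    exact le_max_of_le_left (by positivity)
  refine (csInf_le hbound ⟨h - 2 * m, by omega, by omega, rfl⟩).trans_eq ?_
  rw [hsub, Nat.mul_div_cancel_left m two_pos, Nat.cast_sub (by omega)]
  push_cast
  congr 1
  ring

theorem s2_le_three_mul_div_add {ω : ℝ} (hω : ω < 3) {h : ℕ}
    (hh : 3 * (6 - ω) ≤ (3 - ω) * h) :
    s2 ω h ≤ 3 * h / (6 - ω) + 3 := by
  have h6 : 0 < 6 - ω := by linarith
  have hpos : (0 : ℝ) < h := by nlinarith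
  set m := ⌈(h : ℝ) / (6 - ω)⌉₊
  have hm_ge : (h : ℝ) / (6 - ω) ≤ m := Nat.le_ceil _
  have hm_lt : (m : ℝ) < h / (6 - ω) + 1 := Nat.ceil_lt_add_one (by positivity)
  have hh' : 3 * ((h : ℝ) / (6 - ω) + 1) ≤ h := by
    rw [div_add_one h6.ne', mul_div_assoc', div_le_iff₀ h6]
    linarith
  have hm : 1 ≤ m := Nat.one_le_iff_ne_zero.mpr (Nat.ceil_pos.mpr (by positivity)).ne'
  have hmh : 3 * m ≤ h := by exact_mod_cast (by linarith : (3 * m : ℝ) ≤ h)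
  have hassoc : 3 * (h : ℝ) / (6 - ω) = 3 * (h / (6 - ω)) := mul_div_assoc _ _ _
  refine (s2_le_max hm hmh).trans (max_le (by linarith) ?_)
  calc (h : ℝ) - (3 - ω) * m ≤ h - (3 - ω) * (h / (6 - ω)) := by gcongr
    _ = 3 * h / (6 - ω) := by field_simp; ring
    _ ≤ 3 * h / (6 - ω) + 3 := by linarith

theorem tendsto_tExp_div {ω : ℝ} (hω : ω < 3) :
    Tendsto (fun h : ℕ => tExp ω h / h) atTop (𝓝 (3 / (6 - ω))) := by
  refine tendsto_div_natCast_of_le_of_le_add (d := 3) ?_ ?_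
  · filter_upwards [eventually_ge_atTop 3] with h hh
    rw [div_mul_eq_mul_div]
    exact le_min (three_mul_div_le_s1 hω.le h) (three_mul_div_le_s2 hω.le hh)
  · have hlarge : ∀ᶠ h : ℕ in atTop, 3 * (6 - ω) / (3 - ω) ≤ h :=
      tendsto_natCast_atTop_atTop.eventually_ge_atTop _
    filter_upwards [hlarge] with h hh
    rw [div_le_iff₀' (by linarith)] at hh
    rw [div_mul_eq_mul_div]
    exact (min_le_right _ _).trans (s2_le_three_mul_div_add hω hh)

open Filter in
theorem tExp_asymptotics_general (ω : ℝ) (hω : ω < 2.376) :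
    Tendsto (fun h : ℕ => tExp ω h / (h : ℝ)) atTop (nhds (3 / (6 - ω))) ∧
      ∀ᶠ h : ℕ in atTop, tExp ω h < 0.828 * (h : ℝ) := by
  have hlim := tendsto_tExp_div (ω := ω) (by linarith)
  have hc : 3 / (6 - ω) < 0.828 := by
    rw [div_lt_iff₀ (by linarith)]
    linarith
  refine ⟨hlim, ?_⟩
  filter_upwards [hlim.eventually_lt_const hc, eventually_gt_atTop 0] with h hlt hpos
  rwa [div_lt_iff₀ (by exact_mod_cast hpos)] at hlt

open Filter in
/-- As `h → ∞`, `t(ω,h)/h → 3/(6-ω)`; in particular, since `ω < 2.376`,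
`t(ω,h) < 0.828·h` for all sufficiently large `h`. -/
theorem tExp_asymptotics (ω : ℝ) (hω2 : 2 ≤ ω) (hω : ω < 2.376) :
    Tendsto (fun h : ℕ => tExp ω h / (h : ℝ)) atTop (nhds (3 / (6 - ω))) ∧
      ∀ᶠ h : ℕ in atTop, tExp ω h < 0.828 * (h : ℝ) :=
  tExp_asymptotics_general ω hω
end

section
/- Let G be a graph with real edge weights and let a, b, c be positive integers with a+b+c = h. Define matrix A indexed by a-cliques × b-cliques with A[U,U'] = (sum of weights of edges induced by U ∪ U') if U ∪ U' induces a clique of size a+b, else −∞; and B indexed by b-cliques × c-cliques with B[U',U''] = (sum of weights of edges induced by U' ∪ U'' having at least one endpoint in U'') if U' ∪ U'' induces a clique of size b+c, else −∞. Let C = A ⋆ B be the MAX-distance product. Then for every pair (U, U'') with U ∪ U'' inducing a clique of size a+c, the quantity C[U,U''] + (sum of weights of edges between U and U'') equals the maximum total edge weight of an h-clique of G containing U ∪ U'' (and is −∞ if no such h-clique exists). -/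
/-! For disjoint `U`, `U'`, `W` the weight of the clique `U ∪ U' ∪ W` splits as the `A`-entry at
`(U, U')`, the `B`-entry at `(U', W)` and the cross weight between `U` and `W`. Moreover
`U' ↦ U ∪ U' ∪ W` maps the admissible `b`-cliques onto the `h`-cliques containing `U ∪ W`
(a preimage of `S` is `S \ (U ∪ W)`), so both suprema range over the same values. -/

open Finset

/-- The total weight of the edges induced by a vertex set `S` (each unordered pair counted
once), assuming `w` is symmetric and `S` induces a clique. -/
noncomputable def cliqueWeight {V : Type*} [DecidableEq V] (w : V → V → ℝ) (S : Finset V) : ℝ :=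
  (∑ p ∈ S.offDiag, w p.1 p.2) / 2

/-- The total weight of the edges between `X` and `Y` (for disjoint `X`, `Y`). -/
noncomputable def crossWeight {V : Type*} (w : V → V → ℝ) (X Y : Finset V) : ℝ :=
  ∑ x ∈ X, ∑ y ∈ Y, w x y

lemma Finset.sum_offDiag_eq_sum_sum_sub_sum {α M : Type*} [DecidableEq α] [AddCommGroup M]
    (s : Finset α) (f : α → α → M) :
    ∑ p ∈ s.offDiag, f p.1 p.2 = ∑ x ∈ s, ∑ y ∈ s, f x y - ∑ x ∈ s, f x x := by
  rw [← sum_product', ← diag_union_offDiag, sum_union (disjoint_diag_offDiag s), sum_diag]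
  abel

section Weights

variable {V : Type*} {w : V → V → ℝ}

lemma crossWeight_comm (hw : ∀ x y, w x y = w y x) (X Y : Finset V) :
    crossWeight w Y X = crossWeight w X Y := by
  rw [crossWeight, sum_comm]
  simp only [hw, crossWeight]

variable [DecidableEq V]

lemma cliqueWeight_union (hw : ∀ x y, w x y = w y x) {X Y : Finset V} (hXY : Disjoint X Y) :
    cliqueWeight w (X ∪ Y) = cliqueWeight w X + cliqueWeight w Y + crossWeight w X Y := by
  have hYX := crossWeight_comm hw X Y
  simp only [cliqueWeight, crossWeight, sum_offDiag_eq_sum_sum_sub_sum, sum_union hXY,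
    sum_add_distrib] at hYX ⊢
  linarith

lemma cliqueWeight_union_union (hw : ∀ x y, w x y = w y x) {U U' W : Finset V}
    (hUU' : Disjoint U U') (hU'W : Disjoint U' W) (hUW : Disjoint U W) :
    cliqueWeight w (U ∪ U' ∪ W) =
      cliqueWeight w (U ∪ U') + (cliqueWeight w W + crossWeight w U' W) + crossWeight w U W := by
  rw [cliqueWeight_union hw (disjoint_union_left.2 ⟨hUW, hU'W⟩), crossWeight,
    sum_union hUU', ← crossWeight, ← crossWeight]
  ring

end Weights

section Cliques

variable {V : Type*} [DecidableEq V] {G : SimpleGraph V} {U U' W S : Finset V} {a b c : ℕ}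

lemma SimpleGraph.IsNClique.disjoint_of_union {s t : Finset V} {m n : ℕ} (hs : #s = m)
    (ht : #t = n) (h : G.IsNClique (m + n) (s ∪ t)) : Disjoint s t :=
  card_union_eq_card_add_card.1 (by rw [h.card_eq, hs, ht])

lemma SimpleGraph.isClique_union_union (hUU' : G.IsClique (↑(U ∪ U') : Set V))
    (hU'W : G.IsClique (↑(U' ∪ W) : Set V)) (hUW : G.IsClique (↑(U ∪ W) : Set V)) :
    G.IsClique (↑(U ∪ U' ∪ W) : Set V) := by
  have : Std.Symm G.Adj := G.symm
  simp only [SimpleGraph.IsClique, coe_union, Set.pairwise_union_of_symm, Set.mem_union]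
    at hUU' hU'W hUW ⊢
  grind

lemma SimpleGraph.isNClique_union_union (hU : #U = a) (hU' : #U' = b) (hW : #W = c)
    (hUU' : G.IsNClique (a + b) (U ∪ U')) (hU'W : G.IsNClique (b + c) (U' ∪ W))
    (hUW : G.IsNClique (a + c) (U ∪ W)) : G.IsNClique (a + b + c) (U ∪ U' ∪ W) := by
  refine ⟨isClique_union_union hUU'.1 hU'W.1 hUW.1, ?_⟩
  rw [card_union_of_disjoint (disjoint_union_left.2
    ⟨hUW.disjoint_of_union hU hW, hU'W.disjoint_of_union hU' hW⟩), hUU'.card_eq, hW]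

lemma SimpleGraph.IsNClique.exists_union_union_eq (hU : #U = a) (hW : #W = c)
    (hUW : G.IsNClique (a + c) (U ∪ W)) (hS : G.IsNClique (a + b + c) S) (hUWS : U ∪ W ⊆ S) :
    ∃ U', (#U' = b ∧ G.IsNClique (a + b) (U ∪ U') ∧ G.IsNClique (b + c) (U' ∪ W)) ∧
      U ∪ U' ∪ W = S := by
  set U' := S \ (U ∪ W)
  have hU' : #U' = b := by
    rw [card_sdiff_of_subset hUWS, hS.card_eq, hUW.card_eq]
    omega
  have hUW_U' : Disjoint (U ∪ W) U' := disjoint_sdiff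
  have hS_eq : U ∪ U' ∪ W = S := by rw [union_right_comm, union_sdiff_of_subset hUWS]
  have hUU'S : U ∪ U' ⊆ S := hS_eq ▸ subset_union_left
  have hU'WS : U' ∪ W ⊆ S := hS_eq ▸ union_subset_union_left subset_union_right
  refine ⟨U', ⟨hU', ⟨hS.1.subset (coe_subset.2 hUU'S), ?_⟩,
    ⟨hS.1.subset (coe_subset.2 hU'WS), ?_⟩⟩, hS_eq⟩
  · rw [card_union_of_disjoint (disjoint_union_left.1 hUW_U').1, hU, hU']
  · rw [card_union_of_disjoint (disjoint_union_left.1 hUW_U').2.symm, hU', hW]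

lemma SimpleGraph.image_union_union_eq (hU : #U = a) (hW : #W = c)
    (hUW : G.IsNClique (a + c) (U ∪ W)) :
    (fun U' ↦ U ∪ U' ∪ W) ''
        {U' | #U' = b ∧ G.IsNClique (a + b) (U ∪ U') ∧ G.IsNClique (b + c) (U' ∪ W)} =
      {S | G.IsNClique (a + b + c) S ∧ U ∪ W ⊆ S} := by
  ext S
  constructor
  · rintro ⟨U', ⟨hU', hUU', hU'W⟩, rfl⟩
    exact ⟨isNClique_union_union hU hU' hW hUU' hU'W hUW,
      union_subset_union_left subset_union_left⟩
  · rintro ⟨hS, hUWS⟩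
    exact hUW.exists_union_union_eq hU hW hS hUWS

end Cliques

lemma iSup_ite_eq_iSup_ite_of_image_eq {α β γ : Type*} [CompleteLattice γ] {P : α → Prop}
    {Q : β → Prop} [DecidablePred P] [DecidablePred Q] {g : α → β}
    (hg : g '' {x | P x} = {y | Q y}) {F : α → γ} {f : β → γ}
    (hF : ∀ x, P x → F x = f (g x)) :
    (⨆ x, if P x then F x else ⊥) = ⨆ y, if Q y then f y else ⊥ := by
  simp_rw [← iSup_eq_if]
  calc (⨆ x, ⨆ (_ : P x), F x) = ⨆ x ∈ {x | P x}, f (g x) :=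
        iSup_congr fun x ↦ iSup_congr (hF x)
    _ = ⨆ y ∈ {y | Q y}, f y := by rw [← sSup_image, ← sSup_image, ← hg, Set.image_image]

lemma EReal.iSup_add_coe {ι : Sort*} (f : ι → EReal) (r : ℝ) :
    (⨆ i, f i) + r = ⨆ i, (f i + r) := by
  refine le_antisymm ?_ (iSup_le fun i ↦ by gcongr; exact le_iSup f i)
  have hr : (r : EReal) ≠ ⊥ ∧ (r : EReal) ≠ ⊤ := ⟨coe_ne_bot r, coe_ne_top r⟩
  rw [← le_sub_iff_add_le (.inl hr.1) (.inl hr.2)]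
  exact iSup_le fun i ↦ (le_sub_iff_add_le (.inl hr.1) (.inl hr.2)).2 (le_iSup (f · + r) i)

open scoped Classical in
theorem maxDistanceProduct_heaviest_clique_general {V : Type*} [DecidableEq V]
    (G : SimpleGraph V) (w : V → V → ℝ) (hw : ∀ x y, w x y = w y x)
    (a b c h : ℕ) (hh : a + b + c = h)
    (U W : Finset V) (hU : G.IsNClique a U) (hW : G.IsNClique c W)
    (hUW : G.IsNClique (a + c) (U ∪ W)) :
    (⨆ U' : Finset V,
        if U'.card = b ∧ G.IsNClique (a + b) (U ∪ U') ∧ G.IsNClique (b + c) (U' ∪ W) then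
          ((cliqueWeight w (U ∪ U') + (cliqueWeight w W + crossWeight w U' W) : ℝ) : EReal)
        else ⊥) + ((crossWeight w U W : ℝ) : EReal) =
      ⨆ S : Finset V,
        if G.IsNClique h S ∧ U ∪ W ⊆ S then ((cliqueWeight w S : ℝ) : EReal) else ⊥ := by
  subst hh
  simp_rw [EReal.iSup_add_coe, ite_add, EReal.bot_add]
  refine iSup_ite_eq_iSup_ite_of_image_eq
    (G.image_union_union_eq hU.card_eq hW.card_eq hUW) fun U' ⟨hU', hUU', hU'W⟩ ↦ ?_
  rw [← EReal.coe_add, cliqueWeight_union_union hw (hUU'.disjoint_of_union hU.card_eq hU')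
    (hU'W.disjoint_of_union hU' hW.card_eq) (hUW.disjoint_of_union hU.card_eq hW.card_eq)]

open scoped Classical in
/-- Correctness of the distance-product reduction for heaviest `h`-cliques: for any
`a`-clique `U` and `c`-clique `W` with `U ∪ W` an `(a+c)`-clique, the MAX-distance-product
entry (the sup over `b`-cliques `U'` of `A[U,U'] + B[U',W]`) plus the weight of the edges
between `U` and `W` equals the maximum total edge weight of an `h`-clique containing
`U ∪ W` (and is `-∞` if no such `h`-clique exists). -/
theorem maxDistanceProduct_heaviest_clique {V : Type*} [Fintype V] [DecidableEq V]
    (G : SimpleGraph V) (w : V → V → ℝ) (hw : ∀ x y, w x y = w y x)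
    (a b c h : ℕ) (ha : 0 < a) (hb : 0 < b) (hc : 0 < c) (hh : a + b + c = h)
    (U W : Finset V) (hU : G.IsNClique a U) (hW : G.IsNClique c W)
    (hUW : G.IsNClique (a + c) (U ∪ W)) :
    (⨆ U' : Finset V,
        if U'.card = b ∧ G.IsNClique (a + b) (U ∪ U') ∧ G.IsNClique (b + c) (U' ∪ W) then
          ((cliqueWeight w (U ∪ U') + (cliqueWeight w W + crossWeight w U' W) : ℝ) : EReal)
        else ⊥) + ((crossWeight w U W : ℝ) : EReal) =
      ⨆ S : Finset V,
        if G.IsNClique h S ∧ U ∪ W ⊆ S then ((cliqueWeight w S : ℝ) : EReal) else ⊥ :=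
  maxDistanceProduct_heaviest_clique_general G w hw a b c h hh U W hU hW hUW
end

section
/- Let G be a graph with vertices colored by colors {1,...,k} where k is even, and let C₁, C₂ partition the color set. For each pair (u,v), let D_{C₁,C₂}[u,v] be the maximum weight of a path of length k−1 from u to v whose first k/2 vertices have all distinct colors from C₁ and last k/2 vertices have all distinct colors from C₂ (−∞ if none exists). Then the maximum weight of a colorful path of length k−1 between u and v (using all k colors) equals the maximum of D_{C₁,C₂}[u,v] over all partitions (C₁, C₂) of {1,...,k} with |C₁| = |C₂| = k/2. -/
/-!
A colorful path on `k` vertices determines its own partition: take `C₁` to be the set of colors of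
its first `k / 2` vertices, which has exactly `k / 2` elements by injectivity. Conversely, two
internally colorful halves whose color sets are complementary concatenate to a colorful path. So
both sides are suprema of the same set of path weights.
-/

open Finset

def DistinctOn {α : Type*} (c : ℕ → α) (a b : ℕ) : Prop :=
  ∀ i j, a ≤ i → i < j → j ≤ b → c i ≠ c j

namespace DistinctOn

variable {α : Type*} {c : ℕ → α} {a b : ℕ}

theorem mono {a' b' : ℕ} (h : DistinctOn c a b) (ha : a ≤ a') (hb : b' ≤ b) :
    DistinctOn c a' b' :=
  fun i j hi hij hj => h i j (ha.trans hi) hij (hj.trans hb)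

theorem injOn (h : DistinctOn c a b) : Set.InjOn c (Set.Icc a b) := by
  intro i hi j hj hcij
  by_contra hne
  rcases Nat.lt_or_gt_of_ne hne with hij | hji
  · exact h i j hi.1 hij hj.2 hcij
  · exact h j i hj.1 hji hi.2 hcij.symm

theorem of_split {m : ℕ} (C : Finset α) (hin : ∀ i, a ≤ i → i ≤ m → c i ∈ C)
    (hout : ∀ i, m < i → i ≤ b → c i ∉ C) (hlow : DistinctOn c a m)
    (hhigh : DistinctOn c (m + 1) b) : DistinctOn c a b := by
  intro i j hai hij hjb
  rcases le_or_gt j m with hjm | hmj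
  · exact hlow i j hai hij hjm
  rcases le_or_gt i m with him | hmi
  · exact fun hcij => hout j hmj hjb (hcij ▸ hin i hai him)
  · exact hhigh i j hmi hij hjb

variable [DecidableEq α]

theorem card_image (h : DistinctOn c a b) : ((Icc a b).image c).card = b + 1 - a := by
  rw [card_image_of_injOn (by simpa using h.injOn), Nat.card_Icc]

theorem notMem_image {m i : ℕ} (h : DistinctOn c a b) (hmi : m < i) (hib : i ≤ b) :
    c i ∉ (Icc a m).image c := by
  simp only [mem_image, mem_Icc, not_exists, not_and]
  rintro j ⟨haj, hjm⟩ hcji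
  exact h j i haj (hjm.trans_lt hmi) hib hcji

end DistinctOn

theorem colorful_path_divide_conquer_general {V : Type*} (G : SimpleGraph V)
    (w : V → V → ℝ)
    (k : ℕ) (col : V → Fin k) (u v : V) :
    (⨆ x ∈ {x : ℝ | ∃ p : ℕ → V, p 1 = u ∧ p k = v ∧
        (∀ i, 1 ≤ i → i < k → G.Adj (p i) (p (i + 1))) ∧
        (∀ i j, 1 ≤ i → i < j → j ≤ k → col (p i) ≠ col (p j)) ∧
        x = ∑ i ∈ Finset.Ico 1 k, w (p i) (p (i + 1))}, (x : EReal)) =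
      ⨆ C₁ : Finset (Fin k), if C₁.card = k / 2 then
        (⨆ x ∈ {x : ℝ | ∃ p : ℕ → V, p 1 = u ∧ p k = v ∧
          (∀ i, 1 ≤ i → i < k → G.Adj (p i) (p (i + 1))) ∧
          (∀ i, 1 ≤ i → i ≤ k / 2 → col (p i) ∈ C₁) ∧
          (∀ i, k / 2 < i → i ≤ k → col (p i) ∈ C₁ᶜ) ∧
          (∀ i j, 1 ≤ i → i < j → j ≤ k / 2 → col (p i) ≠ col (p j)) ∧
          (∀ i j, k / 2 < i → i < j → j ≤ k → col (p i) ≠ col (p j)) ∧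
          x = ∑ i ∈ Finset.Ico 1 k, w (p i) (p (i + 1))}, (x : EReal))
      else ⊥ := by
  have hhalf : k / 2 ≤ k := Nat.div_le_self k 2
  apply le_antisymm
  · refine iSup₂_le ?_
    rintro x ⟨p, hpu, hpv, hadj, hcol, hx⟩
    have hdist : DistinctOn (col ∘ p) 1 k := hcol
    refine le_iSup_of_le ((Icc 1 (k / 2)).image (col ∘ p)) ?_
    rw [if_pos (by simpa using (hdist.mono le_rfl hhalf).card_image)]
    refine le_iSup₂_of_le x ⟨p, hpu, hpv, hadj, ?_, ?_, hdist.mono le_rfl hhalf,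
      hdist.mono (by omega) le_rfl, hx⟩ le_rfl
    · exact fun i h1 h2 => mem_image_of_mem _ (mem_Icc.2 ⟨h1, h2⟩)
    · exact fun i h1 h2 => mem_compl.2 (hdist.notMem_image h1 h2)
  · refine iSup_le fun C₁ => ?_
    split_ifs
    · refine iSup₂_le ?_
      rintro x ⟨p, hpu, hpv, hadj, hin, hout, hlow, hhigh, hx⟩
      have hdist : DistinctOn (col ∘ p) 1 k :=
        .of_split C₁ hin (fun i h1 h2 => mem_compl.1 (hout i h1 h2)) hlow hhigh
      exact le_iSup₂_of_le x ⟨p, hpu, hpv, hadj, hdist, hx⟩ le_rfl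
    · exact bot_le

/-- Divide-and-conquer correctness for heaviest colorful paths: the maximum weight of a
colorful path of length `k-1` from `u` to `v` (using all `k` colors) equals the maximum,
over partitions of the color set into halves `C₁, C₁ᶜ` of size `k/2`, of the maximum
weight of a path whose first `k/2` vertices have distinct colors from `C₁` and whose last
`k/2` vertices have distinct colors from `C₁ᶜ`. -/
theorem colorful_path_divide_conquer {V : Type*} [Fintype V] (G : SimpleGraph V)
    [DecidableRel G.Adj] (w : V → V → ℝ) (hw : ∀ x y, w x y = w y x)
    (k : ℕ) (hk : 2 ≤ k) (hkeven : Even k) (col : V → Fin k) (u v : V) :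
    (⨆ x ∈ {x : ℝ | ∃ p : ℕ → V, p 1 = u ∧ p k = v ∧
        (∀ i, 1 ≤ i → i < k → G.Adj (p i) (p (i + 1))) ∧
        (∀ i j, 1 ≤ i → i < j → j ≤ k → col (p i) ≠ col (p j)) ∧
        x = ∑ i ∈ Finset.Ico 1 k, w (p i) (p (i + 1))}, (x : EReal)) =
      ⨆ C₁ : Finset (Fin k), if C₁.card = k / 2 then
        (⨆ x ∈ {x : ℝ | ∃ p : ℕ → V, p 1 = u ∧ p k = v ∧
          (∀ i, 1 ≤ i → i < k → G.Adj (p i) (p (i + 1))) ∧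
          (∀ i, 1 ≤ i → i ≤ k / 2 → col (p i) ∈ C₁) ∧
          (∀ i, k / 2 < i → i ≤ k → col (p i) ∈ C₁ᶜ) ∧
          (∀ i j, 1 ≤ i → i < j → j ≤ k / 2 → col (p i) ≠ col (p j)) ∧
          (∀ i j, k / 2 < i → i < j → j ≤ k → col (p i) ≠ col (p j)) ∧
          x = ∑ i ∈ Finset.Ico 1 k, w (p i) (p (i + 1))}, (x : EReal))
      else ⊥ :=
  colorful_path_divide_conquer_general G w k col u v
end
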